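/- arXiv:2203.15645 — 4 statements merged into one kernel-verified Lean document; each statement's English description precedes it below -/
import Mathlib

section
/- Let r ≥ 2 and s ≥ 1, and let p_1,…,p_s and p'_1,…,p'_s be two tuples of pairwise distinct points of ℙ^r(ℂ). Then there exist δ, δ' ≥ 1, homogeneous polynomials F_0,…,F_r ∈ ℂ[x_0,…,x_r] of degree δ, homogeneous polynomials G_0,…,G_r of degree δ', and a nonzero homogeneous polynomial Φ of degree δ·δ' − 1 with G_i(F_0,…,F_r) = Φ·x_i for i = 0,…,r, such that for every k ∈ {1,…,s} and every nonzero representative v ∈ ℂ^{r+1} of p_k one has Φ(v) ≠ 0 and the vector (F_0(v),…,F_r(v)) is a nonzero representative of p'_k. (Any two reduced sets of s points in ℙ^r are Cremona equivalent by a transformation which is an isomorphism in a neighborhood of the first set.) -/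
/-!
Cremona maps given by homogeneous polynomials compose, and a composite is a local isomorphism
at a point whenever its factors are, at that point and at its image. A general linear change of
coordinates moves each tuple into the chart `x₀ ≠ 0` with pairwise distinct `x₁`-coordinates.
In that chart the triangular map `x ↦ x + h(x_c)` with `h_c = 0` is a Cremona map, with inverse
`x ↦ x - h(x_c)`, and by Lagrange interpolation it carries any tuple with distinct
`x_c`-coordinates to any tuple with the same `x_c`-coordinates. If `a` and `b` are the two
normalized tuples, three such maps, centred at `x₁`, `x₂`, `x₁`, lead from `a` to `b` through
the tuples obtained from `a` and `b` by overwriting `x₂` with the `x₁`-coordinates of `a`.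
-/

open MvPolynomial
open scoped LinearAlgebra.Projectivization

noncomputable section

theorem MvPolynomial.IsHomogeneous.aeval_smul {σ R A : Type*} [CommSemiring R] [CommSemiring A]
    [Algebra R A] {φ : MvPolynomial σ R} {n : ℕ} (hφ : φ.IsHomogeneous n) (c : A) (x : σ → A) :
    MvPolynomial.aeval (c • x) φ = c ^ n * MvPolynomial.aeval x φ := by
  rw [φ.as_sum, map_sum, map_sum, Finset.mul_sum]
  refine Finset.sum_congr rfl fun d hd => ?_
  rw [aeval_monomial, aeval_monomial, ← hφ (mem_support_iff.mp hd)]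
  simp only [Finsupp.prod, Pi.smul_apply, smul_eq_mul, mul_pow, Finset.prod_mul_distrib,
    Finset.prod_pow_eq_pow_sum, Finsupp.weight_apply, Finsupp.sum, Pi.one_apply, mul_one]
  ring

theorem MvPolynomial.IsHomogeneous.eval_smul {σ R : Type*} [CommSemiring R]
    {φ : MvPolynomial σ R} {n : ℕ} (hφ : φ.IsHomogeneous n) (c : R) (x : σ → R) :
    eval (c • x) φ = c ^ n * eval x φ :=
  hφ.aeval_smul c x

theorem MvPolynomial.eval_aeval {σ τ R : Type*} [CommSemiring R] (v : τ → R)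
    (F : σ → MvPolynomial τ R) (g : MvPolynomial σ R) :
    eval v (aeval F g) = eval (fun i => eval v (F i)) g := by
  simpa using comp_aeval_apply (aeval v) g (f := F)

/-- A Cremona map `F` of `ℙ(σ → K)` together with inverse data `G ∘ F = Φ • id`. The condition
`Φ ≠ 0` is not part of the structure: it follows from `Sends` at any point. -/
structure CremonaMap (K σ : Type*) [Field K] where
  deg : ℕ
  invDeg : ℕ
  one_le_deg : 1 ≤ deg
  one_le_invDeg : 1 ≤ invDeg
  F : σ → MvPolynomial σ K
  G : σ → MvPolynomial σ K
  Φ : MvPolynomial σ K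
  isHomogeneous_F : ∀ i, (F i).IsHomogeneous deg
  isHomogeneous_G : ∀ i, (G i).IsHomogeneous invDeg
  isHomogeneous_Φ : Φ.IsHomogeneous (deg * invDeg - 1)
  aeval_G : ∀ i, aeval F (G i) = Φ * X i

namespace CremonaMap

section Composition

variable {K σ : Type*} [Field K] (f g : CremonaMap K σ)

def apply (v : σ → K) : σ → K := fun i => eval v (f.F i)

def Sends (x y : ℙ K (σ → K)) : Prop :=
  ∀ (v : σ → K) (hv : v ≠ 0), Projectivization.mk K v hv = x →
    eval v f.Φ ≠ 0 ∧ ∃ h : f.apply v ≠ 0, Projectivization.mk K (f.apply v) h = y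

theorem apply_smul (c : K) (v : σ → K) : f.apply (c • v) = c ^ f.deg • f.apply v := by
  ext i
  exact IsHomogeneous.eval_smul (f.isHomogeneous_F i) c v

theorem sends_mk {v : σ → K} (hv : v ≠ 0) (hΦ : eval v f.Φ ≠ 0) (hF : f.apply v ≠ 0) :
    f.Sends (Projectivization.mk K v hv) (Projectivization.mk K (f.apply v) hF) := by
  intro w hw hwv
  obtain ⟨u, rfl⟩ := (Projectivization.mk_eq_mk_iff K _ _ hw hv).1 hwv
  have hu : (u : K) ^ f.deg ≠ 0 := pow_ne_zero _ u.ne_zero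
  rw [Units.smul_def, f.apply_smul]
  refine ⟨?_, smul_ne_zero hu hF, (Projectivization.mk_eq_mk_iff' K _ _ _ _).2 ⟨_, rfl⟩⟩
  rw [IsHomogeneous.eval_smul f.isHomogeneous_Φ]
  exact mul_ne_zero (pow_ne_zero _ u.ne_zero) hΦ

private theorem deg_comp {a b c d : ℕ} (hac : 1 ≤ a * c) (hbd : 1 ≤ b * d) :
    a * (b * d - 1) * c + (a * c - 1) = a * b * (c * d) - 1 := by
  obtain ⟨e, he⟩ := Nat.exists_eq_add_of_le hbd
  have : a * b * (c * d) = a * c * (b * d) := by ring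
  rw [this, he, Nat.add_sub_cancel_left, mul_add, mul_one]
  have : a * e * c = a * c * e := by ring
  omega

/-- `f` followed by `g`. -/
def comp : CremonaMap K σ where
  deg := f.deg * g.deg
  invDeg := f.invDeg * g.invDeg
  one_le_deg := one_le_mul f.one_le_deg g.one_le_deg
  one_le_invDeg := one_le_mul f.one_le_invDeg g.one_le_invDeg
  F i := aeval f.F (g.F i)
  G i := aeval g.G (f.G i)
  Φ := aeval f.F g.Φ ^ f.invDeg * f.Φ
  isHomogeneous_F i := (g.isHomogeneous_F i).aeval f.F f.isHomogeneous_F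
  isHomogeneous_G i := by
    simpa [mul_comm] using (f.isHomogeneous_G i).aeval g.G g.isHomogeneous_G
  isHomogeneous_Φ := by
    rw [← deg_comp (one_le_mul f.one_le_deg f.one_le_invDeg)
      (one_le_mul g.one_le_deg g.one_le_invDeg)]
    exact ((g.isHomogeneous_Φ.aeval f.F f.isHomogeneous_F).pow _).mul f.isHomogeneous_Φ
  aeval_G i := by
    have hGF : (fun j => aeval (fun i => aeval f.F (g.F i)) (g.G j)) = aeval f.F g.Φ • f.F := by
      ext1 j
      rw [← comp_aeval_apply, g.aeval_G, map_mul, aeval_X, Pi.smul_apply, smul_eq_mul]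
    rw [comp_aeval_apply, hGF, IsHomogeneous.aeval_smul (f.isHomogeneous_G i), f.aeval_G,
      mul_assoc]

variable {f g}

theorem Sends.Φ_ne_zero {x y : ℙ K (σ → K)} (h : f.Sends x y) : f.Φ ≠ 0 :=
  fun h0 => (h x.rep x.rep_nonzero x.mk_rep).1 (by rw [h0, map_zero])

theorem comp_apply (v : σ → K) : (f.comp g).apply v = g.apply (f.apply v) := by
  ext i
  exact eval_aeval v f.F (g.F i)

theorem Sends.comp {x y z : ℙ K (σ → K)} (hf : f.Sends x y) (hg : g.Sends y z) :
    (f.comp g).Sends x z := by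
  intro v hv hvx
  obtain ⟨hΦf, hFv, hy⟩ := hf v hv hvx
  obtain ⟨hΦg, hGv, hz⟩ := hg _ hFv hy
  refine ⟨?_, by rwa [comp_apply], by simpa only [comp_apply] using hz⟩
  change eval v (aeval f.F g.Φ ^ f.invDeg * f.Φ) ≠ 0
  rw [map_mul, map_pow, eval_aeval]
  exact mul_ne_zero (pow_ne_zero _ hΦg) hΦf

end Composition

section Linear

variable {K σ : Type*} [Field K] [Fintype σ]

def linearForms (M : Matrix σ σ K) (i : σ) : MvPolynomial σ K := ∑ j, C (M i j) * X j

theorem isHomogeneous_linearForms (M : Matrix σ σ K) (i : σ) :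
    (linearForms M i).IsHomogeneous 1 :=
  IsHomogeneous.sum _ _ _ fun j _ => isHomogeneous_C_mul_X _ j

theorem eval_linearForms (M : Matrix σ σ K) (v : σ → K) (i : σ) :
    eval v (linearForms M i) = M.mulVec v i := by
  simp [linearForms, Matrix.mulVec, dotProduct]

theorem aeval_linearForms (M N : Matrix σ σ K) (i : σ) :
    aeval (linearForms M) (linearForms N i) = linearForms (N * M) i := by
  simp only [linearForms, map_sum, map_mul, aeval_C, aeval_X, Matrix.mul_apply, Finset.mul_sum,
    Finset.sum_mul, algebraMap_eq, ← mul_assoc]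
  exact Finset.sum_comm

variable [DecidableEq σ]

theorem linearForms_one : linearForms (1 : Matrix σ σ K) = X := by
  ext1 i
  simp [linearForms, Matrix.one_apply]

def ofLinearEquiv (T : (σ → K) ≃ₗ[K] (σ → K)) : CremonaMap K σ where
  deg := 1
  invDeg := 1
  one_le_deg := le_rfl
  one_le_invDeg := le_rfl
  F := linearForms (LinearMap.toMatrix' T)
  G := linearForms (LinearMap.toMatrix' T.symm)
  Φ := 1
  isHomogeneous_F := isHomogeneous_linearForms _
  isHomogeneous_G := isHomogeneous_linearForms _
  isHomogeneous_Φ := isHomogeneous_one _ _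
  aeval_G i := by
    rw [aeval_linearForms, ← LinearMap.toMatrix'_comp, T.symm_comp, LinearMap.toMatrix'_id,
      linearForms_one, one_mul]

theorem ofLinearEquiv_apply (T : (σ → K) ≃ₗ[K] (σ → K)) (v : σ → K) :
    (ofLinearEquiv T).apply v = T v := by
  ext i
  rw [apply, ofLinearEquiv, eval_linearForms, LinearMap.toMatrix'_mulVec]
  rfl

theorem sends_ofLinearEquiv (T : (σ → K) ≃ₗ[K] (σ → K)) (x : ℙ K (σ → K)) :
    (ofLinearEquiv T).Sends x (T • x) := by
  induction x using Projectivization.ind with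
  | h v hv =>
    have hT := ofLinearEquiv_apply T v
    convert sends_mk (ofLinearEquiv T) hv (by simp [ofLinearEquiv]) (hT ▸ T.map_ne_zero_iff.2 hv)
    rw [Projectivization.smul_mk]
    congr 1
    exact hT.symm

end Linear

section Shear

variable {K : Type*} [Field K] {n : ℕ}

theorem cons_one_ne_zero (a : Fin n → K) : (Fin.cons 1 a : Fin (n + 1) → K) ≠ 0 :=
  fun h => one_ne_zero (congrFun h 0)

def ofChart (a : Fin n → K) : ℙ K (Fin (n + 1) → K) :=
  Projectivization.mk K (Fin.cons 1 a) (cons_one_ne_zero a)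

theorem mk_eq_ofChart {v : Fin (n + 1) → K} (hv : v ≠ 0) (h0 : v 0 = 1) :
    Projectivization.mk K v hv = ofChart (Fin.tail v) := by
  simp only [ofChart, ← h0, Fin.cons_self_tail]

/-- `X₀ᴺ p(X_{c+1} / X₀)`: the coordinate `c` of the chart `X₀ ≠ 0` is `X_{c+1}`. -/
def shearForm (c : Fin n) (N : ℕ) (p : Polynomial K) : MvPolynomial (Fin (n + 1)) K :=
  aeval ![X c.succ, X 0] (p.homogenize N)

theorem isHomogeneous_shearForm (c : Fin n) (N : ℕ) (p : Polynomial K) :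
    (shearForm c N p).IsHomogeneous N := by
  have hX : ∀ i, (![X c.succ, X 0] i : MvPolynomial (Fin (n + 1)) K).IsHomogeneous 1 :=
    Fin.forall_fin_two.2 ⟨isHomogeneous_X K c.succ, isHomogeneous_X K 0⟩
  unfold shearForm
  simpa only [one_mul] using (Polynomial.isHomogeneous_homogenize (n := N) p).aeval _ hX

theorem aeval_shearForm {A : Type*} [CommRing A] [Algebra K A] (c : Fin n) (N : ℕ)
    (p : Polynomial K) (x : Fin (n + 1) → A) :
    aeval x (shearForm c N p) = aeval ![x c.succ, x 0] (p.homogenize N) := by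
  rw [shearForm, comp_aeval_apply]
  congr 1
  ext i
  fin_cases i <;> simp

theorem aeval_shearForm_of_eq_mul {A : Type*} [CommRing A] [Algebra K A] (c : Fin n) (N : ℕ)
    (p : Polynomial K) {x y : Fin (n + 1) → A} (t : A) (h0 : x 0 = t * y 0)
    (hc : x c.succ = t * y c.succ) :
    aeval x (shearForm c N p) = t ^ N * aeval y (shearForm c N p) := by
  have hxy : ![x c.succ, x 0] = t • ![y c.succ, y 0] := by
    ext i
    fin_cases i <;> simp [h0, hc]
  rw [aeval_shearForm, aeval_shearForm, hxy,
    IsHomogeneous.aeval_smul (Polynomial.isHomogeneous_homogenize p)]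

theorem eval_cons_shearForm (c : Fin n) {N : ℕ} {p : Polynomial K} (hp : p.natDegree ≤ N)
    (a : Fin n → K) : eval (Fin.cons 1 a) (shearForm c N p) = p.eval (a c) := by
  rw [← aeval_eq_eval, aeval_shearForm, Polynomial.aeval_homogenize_of_eq_one hp _ rfl]
  simp

/-- The map `x ↦ x + h(x_c)` of the chart `X₀ ≠ 0`. Since `h c = 0` it fixes `x_c`, so its
inverse is `x ↦ x - h(x_c)`. -/
def shear (c : Fin n) (h : Fin n → Polynomial K) (hc : h c = 0) : CremonaMap K (Fin (n + 1)) :=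
  let N := Finset.univ.sup fun j => (h j).natDegree
  have hX (j : Fin n) :
      (X j.succ * X 0 ^ N : MvPolynomial (Fin (n + 1)) K).IsHomogeneous (N + 1) := by
    simpa [add_comm] using (isHomogeneous_X K j.succ).mul (isHomogeneous_X_pow (R := K) 0 N)
  { deg := N + 1
    invDeg := N + 1
    one_le_deg := Nat.le_add_left 1 N
    one_le_invDeg := Nat.le_add_left 1 N
    F := Fin.cons (X 0 ^ (N + 1)) fun j => X j.succ * X 0 ^ N + shearForm c (N + 1) (h j)
    G := Fin.cons (X 0 ^ (N + 1)) fun j => X j.succ * X 0 ^ N - shearForm c (N + 1) (h j)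
    Φ := X 0 ^ ((N + 1) * (N + 1) - 1)
    isHomogeneous_F := Fin.cases (isHomogeneous_X_pow 0 _) fun j =>
      (hX j).add (isHomogeneous_shearForm c _ _)
    isHomogeneous_G := Fin.cases (isHomogeneous_X_pow 0 _) fun j =>
      (hX j).sub (isHomogeneous_shearForm c _ _)
    isHomogeneous_Φ := isHomogeneous_X_pow 0 _
    aeval_G := by
      set F : Fin (n + 1) → MvPolynomial (Fin (n + 1)) K :=
        Fin.cons (X 0 ^ (N + 1)) fun j => X j.succ * X 0 ^ N + shearForm c (N + 1) (h j)
      have hS (p : Polynomial K) :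
          aeval F (shearForm c (N + 1) p) = (X 0 ^ N) ^ (N + 1) * shearForm c (N + 1) p := by
        rw [aeval_shearForm_of_eq_mul c (N + 1) p (y := X) (X 0 ^ N), aeval_X_left_apply]
        · simp [F, pow_succ]
        · simp [F, hc, shearForm, mul_comm]
      have e : (N + 1) * (N + 1) - 1 = N + (N + 1) * N := by
        rw [Nat.sub_eq_iff_eq_add (Nat.one_le_iff_ne_zero.2 (by positivity))]
        ring
      intro i
      induction i using Fin.cases with
      | zero =>
        simp only [F, Fin.cons_zero, map_pow, aeval_X, ← pow_mul, ← pow_succ, e]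
        ring
      | succ j =>
        simp only [Fin.cons_succ, map_sub, map_mul, map_pow, aeval_X, hS]
        rw [e]
        simp only [F, Fin.cons_succ, Fin.cons_zero]
        ring }

theorem shear_apply_cons (c : Fin n) (h : Fin n → Polynomial K) (hc : h c = 0) (a : Fin n → K) :
    (shear c h hc).apply (Fin.cons 1 a) = Fin.cons 1 (a + fun j => (h j).eval (a c)) := by
  ext i
  induction i using Fin.cases with
  | zero => simp [apply, shear]
  | succ j =>
    simp only [apply, shear, Fin.cons_succ, map_add, map_mul, map_pow, eval_X, Fin.cons_zero,
      one_pow, mul_one, Pi.add_apply]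
    rw [eval_cons_shearForm c
      ((Finset.le_sup (f := fun j => (h j).natDegree) (Finset.mem_univ j)).trans (Nat.le_succ _))]

theorem sends_shear (c : Fin n) (h : Fin n → Polynomial K) (hc : h c = 0) (a : Fin n → K) :
    (shear c h hc).Sends (ofChart a) (ofChart (a + fun j => (h j).eval (a c))) := by
  have := (shear c h hc).sends_mk (cons_one_ne_zero a) (by simp [shear])
    (by rw [shear_apply_cons]; exact cons_one_ne_zero _)
  simp only [shear_apply_cons] at this
  exact this

theorem exists_sends_ofChart {ι : Type*} [Fintype ι] (c : Fin n) {a b : ι → Fin n → K}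
    (hab : ∀ k, a k c = b k c) (ha : Function.Injective fun k => a k c) :
    ∃ f : CremonaMap K (Fin (n + 1)), ∀ k, f.Sends (ofChart (a k)) (ofChart (b k)) := by
  classical
  let h j := Lagrange.interpolate Finset.univ (fun k => a k c) fun k => b k j - a k j
  have hc : h c = 0 := by simp [h, hab]
  refine ⟨shear c h hc, fun k => ?_⟩
  convert sends_shear c h hc (a k) using 2
  ext j
  rw [Pi.add_apply, Lagrange.eval_interpolate_at_node _ ha.injOn (Finset.mem_univ k),
    add_sub_cancel]

end Shear

section Normalization

variable {K ι : Type*} [Field K] [Infinite K] [Finite ι]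

theorem exists_linearEquiv_apply_ne_zero {σ : Type*} [Finite σ] [DecidableEq σ]
    (v : ι → σ → K) (hv : ∀ k, v k ≠ 0) (i : σ) :
    ∃ T : (σ → K) ≃ₗ[K] (σ → K), (∀ k, T (v k) i ≠ 0) ∧ ∀ x j, j ≠ i → T x j = x j := by
  obtain ⟨ℓ, hℓ⟩ := Module.exists_dual_forall_apply_ne_zero (K := K)
    (fun o : Option ι => o.elim (Pi.single i 1) v) (by rintro (_ | k) <;> simp [hv])
  let L : (σ → K) →ₗ[K] (σ → K) := LinearMap.pi fun j => if j = i then ℓ else LinearMap.proj j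
  have hLi x : L x i = ℓ x := by simp [L]
  have hL x j (hj : j ≠ i) : L x j = x j := by simp [L, hj]
  have hinj : Function.Injective L := by
    refine (injective_iff_map_eq_zero L).2 fun x hx => ?_
    have hx_eq : x = x i • Pi.single i 1 := by
      ext j
      by_cases hj : j = i
      · simp [hj]
      · simpa [hj, hL x j hj] using congrFun hx j
    have : x i * ℓ (Pi.single i 1) = 0 := by
      rw [← smul_eq_mul, ← map_smul, ← hx_eq, ← hLi, hx, Pi.zero_apply]
    rw [hx_eq, (mul_eq_zero.1 this).resolve_right (hℓ none), zero_smul]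
  refine ⟨LinearEquiv.ofInjectiveEndo L hinj, fun k => ?_, hL⟩
  simpa [hLi] using hℓ (some k)

variable {n : ℕ}

theorem exists_linearEquiv_smul_eq_ofChart {p : ι → ℙ K (Fin (n + 1) → K)}
    (hp : Function.Injective p) (c : Fin n) :
    ∃ (T : (Fin (n + 1) → K) ≃ₗ[K] (Fin (n + 1) → K)) (a : ι → Fin n → K),
      (∀ k, T • p k = ofChart (a k)) ∧ Function.Injective fun k => a k c := by
  obtain ⟨T₀, hT₀, -⟩ := exists_linearEquiv_apply_ne_zero (fun k => (p k).rep)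
    (fun k => (p k).rep_nonzero) 0
  let w k := (T₀ (p k).rep 0)⁻¹ • T₀ (p k).rep
  have hw0 k : w k 0 = 1 := inv_mul_cancel₀ (hT₀ k)
  have hw_ne k : w k ≠ 0 := fun h => one_ne_zero ((hw0 k).symm.trans (congrFun h 0))
  have hw k : Projectivization.mk K (w k) (hw_ne k) = T₀ • p k := by
    conv_rhs => rw [← (p k).mk_rep, Projectivization.smul_mk]
    exact (Projectivization.mk_eq_mk_iff' K _ _ _ _).2 ⟨_, rfl⟩
  have hwinj : Function.Injective w := fun j k hjk =>
    hp (MulAction.injective T₀ ((hw j).symm.trans (by simp_rw [hjk]; exact hw k)))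
  obtain ⟨T₁, hT₁, hT₁fix⟩ := exists_linearEquiv_apply_ne_zero
    (fun jk : {jk : ι × ι // jk.1 ≠ jk.2} => w jk.1.1 - w jk.1.2)
    (fun jk => sub_ne_zero.2 (hwinj.ne jk.2)) c.succ
  have hT₁w0 k : T₁ (w k) 0 = 1 := (hT₁fix _ 0 c.succ_ne_zero.symm).trans (hw0 k)
  refine ⟨T₁ * T₀, fun k => Fin.tail (T₁ (w k)), fun k => ?_, fun j k hjk => ?_⟩
  · rw [mul_smul, ← hw, Projectivization.smul_mk]
    exact mk_eq_ofChart _ (hT₁w0 k)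
  · by_contra hne
    apply hT₁ ⟨(j, k), hne⟩
    have hjk' : T₁ (w j) c.succ = T₁ (w k) c.succ := hjk
    simpa [sub_eq_zero] using hjk'

theorem exists_sends (hn : 2 ≤ n) {p p' : ι → ℙ K (Fin (n + 1) → K)}
    (hp : Function.Injective p) (hp' : Function.Injective p') :
    ∃ f : CremonaMap K (Fin (n + 1)), ∀ k, f.Sends (p k) (p' k) := by
  have := Fintype.ofFinite ι
  let c₁ : Fin n := ⟨0, by omega⟩
  let c₂ : Fin n := ⟨1, by omega⟩
  have hc : c₁ ≠ c₂ := by simp [c₁, c₂, Fin.ext_iff]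
  obtain ⟨T, a, hTa, ha⟩ := exists_linearEquiv_smul_eq_ofChart hp c₁
  obtain ⟨T', b, hTb, hb⟩ := exists_linearEquiv_smul_eq_ofChart hp' c₁
  let a' k := Function.update (a k) c₂ (a k c₁)
  let b' k := Function.update (b k) c₂ (a k c₁)
  obtain ⟨f₁, hf₁⟩ := exists_sends_ofChart c₁ (b := a') (fun k => by simp [a', hc]) ha
  obtain ⟨f₂, hf₂⟩ := exists_sends_ofChart c₂ (a := a') (b := b') (fun k => by simp [a', b'])
    (by simpa [a'] using ha)
  obtain ⟨f₃, hf₃⟩ := exists_sends_ofChart c₁ (a := b') (b := b) (fun k => by simp [b', hc])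
    (by simpa [b', hc] using hb)
  refine ⟨(ofLinearEquiv T).comp (f₁.comp (f₂.comp (f₃.comp (ofLinearEquiv T'⁻¹)))), fun k => ?_⟩
  have h₀ := sends_ofLinearEquiv T (p k)
  have h₄ := sends_ofLinearEquiv T'⁻¹ (T' • p' k)
  rw [hTa] at h₀
  rw [inv_smul_smul, hTb] at h₄
  exact h₀.comp ((hf₁ k).comp ((hf₂ k).comp ((hf₃ k).comp h₄)))

end Normalization

end CremonaMap

end

/-- Any two reduced sets of `s` points in `ℙ^r` (`r ≥ 2`) are Cremona equivalent by a
transformation which is an isomorphism in a neighborhood of the first set. -/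
theorem points_cremona_equivalent (r s : ℕ) (hr : 2 ≤ r) (hs : 1 ≤ s)
    (p p' : Fin s → Projectivization ℂ (Fin (r + 1) → ℂ))
    (hp : Function.Injective p) (hp' : Function.Injective p') :
    ∃ (δ δ' : ℕ), 1 ≤ δ ∧ 1 ≤ δ' ∧
    ∃ (F G : Fin (r + 1) → MvPolynomial (Fin (r + 1)) ℂ)
      (Φ : MvPolynomial (Fin (r + 1)) ℂ),
      (∀ i, (F i).IsHomogeneous δ) ∧
      (∀ i, (G i).IsHomogeneous δ') ∧
      Φ ≠ 0 ∧ Φ.IsHomogeneous (δ * δ' - 1) ∧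
      (∀ i, MvPolynomial.aeval F (G i) = Φ * MvPolynomial.X i) ∧
      (∀ (k : Fin s) (v : Fin (r + 1) → ℂ) (hv : v ≠ 0),
        Projectivization.mk ℂ v hv = p k →
          MvPolynomial.eval v Φ ≠ 0 ∧
          ∃ h : (fun i => MvPolynomial.eval v (F i)) ≠ 0,
            Projectivization.mk ℂ (fun i => MvPolynomial.eval v (F i)) h = p' k) := by
  obtain ⟨f, hf⟩ := CremonaMap.exists_sends hr hp hp'
  exact ⟨f.deg, f.invDeg, f.one_le_deg, f.one_le_invDeg, f.F, f.G, f.Φ, f.isHomogeneous_F,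
    f.isHomogeneous_G, (hf ⟨0, hs⟩).Φ_ne_zero, f.isHomogeneous_Φ, f.aeval_G, hf⟩
end

section
/- Let r ≥ 3 and let I ⊆ ℂ[x_0,…,x_r] be a homogeneous ideal. Suppose there are real numbers δ, C ≥ 0 and d_0 such that for all d ≥ d_0 the ℂ-dimension of the degree-d homogeneous component of ℂ[x_0,…,x_r]/I is at most δ·d^{r−2}/(r−2)! + C·d^{r−3}. Then there is d_1 such that for every d ≥ d_1 there exists a nonzero polynomial P ∈ I of the form P = x_0·F + G with F, G homogeneous of degrees d−1 and d respectively, neither involving x_0 (i.e., a nonzero monoid of degree d with vertex [1:0:…:0] containing the zero scheme of I). -/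
/-!
The forms of degree `d` in `x_1, …, x_r` span a space of dimension `C(r + d - 1, d)`, which is at
least `d ^ (r - 1) / (r - 1)!`. The assumed bound on the Hilbert function of `ℂ[x_0, …, x_r] / I`
grows only like `d ^ (r - 2)`, so for large `d` these forms cannot inject into the degree-`d` part
of the quotient: some nonzero form `G` in `x_1, …, x_r` lies in `I`. It is a monoid with `F = 0`,
namely a cone with vertex `[1 : 0 : … : 0]`.
-/

/-- The degree-`d` homogeneous component of the quotient ring `ℂ[x_0,…,x_r]/I`:
the space of degree-`d` homogeneous polynomials modulo those lying in `I`. -/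
abbrev quotComponent (r d : ℕ) (I : Ideal (MvPolynomial (Fin (r + 1)) ℂ)) :=
  (MvPolynomial.homogeneousSubmodule (Fin (r + 1)) ℂ d) ⧸
    (Submodule.comap (MvPolynomial.homogeneousSubmodule (Fin (r + 1)) ℂ d).subtype
      (I.restrictScalars ℂ))

open MvPolynomial Module Filter Asymptotics

namespace MvPolynomial

variable {σ R : Type*} [CommSemiring R]

theorem homogeneousSubmodule_eq_restrictSupport (d : ℕ) :
    homogeneousSubmodule σ R d = restrictSupport R {m | m.degree = d} :=
  homogeneousSubmodule_eq_finsupp_supported σ R d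

instance [Finite σ] (d : ℕ) : Module.Finite R (homogeneousSubmodule σ R d) :=
  Module.Finite.iff_fg.mpr (homogeneousSubmodule_fg σ R d)

theorem finrank_homogeneousSubmodule [Fintype σ] [StrongRankCondition R] (d : ℕ) :
    finrank R (homogeneousSubmodule σ R d) = (Fintype.card σ + d - 1).choose d := by
  classical
  have hset : {m : σ →₀ ℕ | m.degree = d} =
      ((Finset.univ : Finset σ).finsuppAntidiag d : Set (σ →₀ ℕ)) := by
    ext m
    simp [Finsupp.degree_eq_sum]
  rw [homogeneousSubmodule_eq_restrictSupport, finrank_eq_nat_card_basis (basisRestrictSupport R _),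
    hset, Nat.card_coe_set_eq, Set.ncard_coe_finset, Finset.card_finsuppAntidiag_nat_eq_choose,
    Finset.card_univ]

theorem rename_mem_supported_range {τ : Type*} (f : σ → τ) (p : MvPolynomial σ R) :
    rename f p ∈ supported R (Set.range f) := by
  classical
  rw [mem_supported]
  refine (Finset.coe_subset.mpr (vars_rename f p)).trans ?_
  simp

end MvPolynomial

theorem Asymptotics.IsLittleO.eventually_lt {α : Type*} {l : Filter α} {f g : α → ℝ}
    (h : f =o[l] g) (hg : ∀ᶠ x in l, 0 < g x) : ∀ᶠ x in l, f x < g x := by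
  filter_upwards [h.def one_half_pos, hg] with x hfx hgx
  rw [Real.norm_eq_abs, Real.norm_eq_abs, abs_of_pos hgx] at hfx
  linarith [le_abs_self (f x)]

theorem cast_pow_div_factorial_le_choose (r d : ℕ) (hr : 1 ≤ r) :
    (d : ℝ) ^ (r - 1) / (r - 1).factorial ≤ (r + d - 1).choose d := by
  rw [show r + d - 1 = d + (r - 1) by omega, Nat.choose_symm_add]
  refine le_trans ?_ (Nat.pow_le_choose (r - 1) (d + (r - 1)))
  gcongr
  omega

theorem isLittleO_hilbertBound (r : ℕ) (hr : 2 ≤ r) (δ C : ℝ) :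
    (fun x : ℝ => δ * x ^ (r - 2) / (r - 2).factorial + C * x ^ (r - 3)) =o[atTop]
      fun x => x ^ (r - 1) / (r - 1).factorial := by
  have hpow {p : ℕ} (hp : p < r - 1) (a : ℝ) :
      (fun x : ℝ => a * x ^ p) =o[atTop] fun x => x ^ (r - 1) / (r - 1).factorial :=
    ((isLittleO_pow_pow_atTop_of_lt hp).const_mul_left a).trans_isBigO <|
      (isBigO_self_const_mul (inv_ne_zero (Nat.cast_ne_zero.mpr (r - 1).factorial_ne_zero))
        _ _).congr_right fun x => by ring
  exact ((hpow (p := r - 2) (by omega) (δ / (r - 2).factorial)).add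
    (hpow (p := r - 3) (by omega) C)).congr_left fun x => by ring

theorem eventually_hilbertBound_lt_choose (r : ℕ) (hr : 2 ≤ r) (δ C : ℝ) :
    ∀ᶠ d : ℕ in atTop,
      δ * (d : ℝ) ^ (r - 2) / (r - 2).factorial + C * (d : ℝ) ^ (r - 3) <
        (r + d - 1).choose d := by
  have hpos : ∀ᶠ x : ℝ in atTop, 0 < x ^ (r - 1) / (r - 1).factorial :=
    (eventually_gt_atTop 0).mono fun x hx => by positivity
  filter_upwards [((isLittleO_hilbertBound r hr δ C).eventually_lt hpos).natCast_atTop]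
    with d hd
  exact hd.trans_le (cast_pow_div_factorial_le_choose r d (by omega))

theorem exists_homogeneous_rename_succ_mem {r d : ℕ} {I : Ideal (MvPolynomial (Fin (r + 1)) ℂ)}
    (h : finrank ℂ (quotComponent r d I) < (r + d - 1).choose d) :
    ∃ g : MvPolynomial (Fin r) ℂ, g ≠ 0 ∧ g.IsHomogeneous d ∧ rename Fin.succ g ∈ I := by
  let φ : homogeneousSubmodule (Fin r) ℂ d →ₗ[ℂ] quotComponent r d I :=
    Submodule.mkQ _ ∘ₗ
      (rename Fin.succ).toLinearMap.restrict fun _ hg => IsHomogeneous.rename_isHomogeneous hg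
  have hker : LinearMap.ker φ ≠ ⊥ := LinearMap.ker_ne_bot_of_finrank_lt <| by
    rwa [finrank_homogeneousSubmodule, Fintype.card_fin]
  obtain ⟨⟨g, hg⟩, hgker, hg0⟩ := (Submodule.ne_bot_iff _).mp hker
  exact ⟨g, by simpa using hg0, hg,
    Submodule.mem_comap.mp ((Submodule.Quotient.mk_eq_zero _).mp hgker)⟩

theorem exists_monoid_in_ideal_general (r : ℕ) (hr : 3 ≤ r)
    (I : Ideal (MvPolynomial (Fin (r + 1)) ℂ))
    (δ C : ℝ)
    (d₀ : ℕ)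
    (hHilb : ∀ d : ℕ, d₀ ≤ d →
      (Module.finrank ℂ (quotComponent r d I) : ℝ) ≤
        δ * (d : ℝ) ^ (r - 2) / (Nat.factorial (r - 2) : ℝ) + C * (d : ℝ) ^ (r - 3)) :
    ∃ d₁ : ℕ, ∀ d : ℕ, d₁ ≤ d →
      ∃ P ∈ I, P ≠ 0 ∧
        ∃ F G : MvPolynomial (Fin (r + 1)) ℂ,
          F.IsHomogeneous (d - 1) ∧ G.IsHomogeneous d ∧
          F ∈ MvPolynomial.supported ℂ {i | i ≠ 0} ∧
          G ∈ MvPolynomial.supported ℂ {i | i ≠ 0} ∧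
          P = MvPolynomial.X 0 * F + G := by
  obtain ⟨d₁, hd₁⟩ := eventually_atTop.mp (eventually_hilbertBound_lt_choose r (by omega) δ C)
  refine ⟨max d₀ d₁, fun d hd => ?_⟩
  have hrank : finrank ℂ (quotComponent r d I) < (r + d - 1).choose d := by
    exact_mod_cast (hHilb d (le_of_max_le_left hd)).trans_lt (hd₁ d (le_of_max_le_right hd))
  obtain ⟨g, hg0, hg, hgI⟩ := exists_homogeneous_rename_succ_mem hrank
  have hsupp : rename Fin.succ g ∈ supported ℂ {i : Fin (r + 1) | i ≠ 0} :=
    supported_mono (by rintro _ ⟨i, rfl⟩; exact Fin.succ_ne_zero i)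
      (rename_mem_supported_range _ g)
  have hG0 : rename Fin.succ g ≠ 0 :=
    ((rename_injective _ (Fin.succ_injective r)).ne_iff' (map_zero _)).mpr hg0
  exact ⟨rename Fin.succ g, hgI, hG0, 0, _, isHomogeneous_zero .., hg.rename_isHomogeneous,
    Subalgebra.zero_mem _, hsupp, by rw [mul_zero, zero_add]⟩

/-- If the Hilbert function of `ℂ[x_0,…,x_r]/I` grows like `δ·d^{r-2}/(r-2)! + C·d^{r-3}`,
then for every large `d` there is a nonzero monoid of degree `d` with vertex `[1:0:…:0]`
lying in `I`. -/
theorem exists_monoid_in_ideal (r : ℕ) (hr : 3 ≤ r)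
    (I : Ideal (MvPolynomial (Fin (r + 1)) ℂ))
    (hI : ∀ P ∈ I, ∀ n : ℕ, MvPolynomial.homogeneousComponent n P ∈ I)
    (δ C : ℝ) (hδ : 0 ≤ δ) (hC : 0 ≤ C)
    (d₀ : ℕ)
    (hHilb : ∀ d : ℕ, d₀ ≤ d →
      (Module.finrank ℂ (quotComponent r d I) : ℝ) ≤
        δ * (d : ℝ) ^ (r - 2) / (Nat.factorial (r - 2) : ℝ) + C * (d : ℝ) ^ (r - 3)) :
    ∃ d₁ : ℕ, ∀ d : ℕ, d₁ ≤ d →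
      ∃ P ∈ I, P ≠ 0 ∧
        ∃ F G : MvPolynomial (Fin (r + 1)) ℂ,
          F.IsHomogeneous (d - 1) ∧ G.IsHomogeneous d ∧
          F ∈ MvPolynomial.supported ℂ {i | i ≠ 0} ∧
          G ∈ MvPolynomial.supported ℂ {i | i ≠ 0} ∧
          P = MvPolynomial.X 0 * F + G :=
  exists_monoid_in_ideal_general r hr I δ C d₀ hHilb
end

section
/- Let r ≥ 1, d ≥ 1, and let K be the fraction field of ℂ[x_0,…,x_r]. Let F_0, F be homogeneous of degree d−1 and G_0, G homogeneous of degree d, none of the four involving x_0, and suppose F_0·G ≠ F·G_0. Then there exists a ℂ-algebra automorphism σ of K with σ(x_0) = (x_0·F_0 + G_0)/(x_0·F + G) and σ(x_i) = x_i for i = 1,…,r; moreover its inverse satisfies σ^{−1}(x_0) = (G_0 − x_0·G)/(x_0·F − F_0) and σ^{−1}(x_i) = x_i for i = 1,…,r. (De Jonquières transformations are birational and their inverses are again de Jonquières transformations.) -/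
/-!
The variable `x₀` is transcendental over `k[x₁, …, xᵣ]`, and `x₀ ↦ (F₀ x₀ + G₀) / (F x₀ + G)` is
the Möbius transformation of the matrix `[[F₀, G₀], [F, G]]` with entries in `k[x₁, …, xᵣ]` and
nonzero determinant. It is inverted by the Möbius transformation of `[[-G, G₀], [F, -F₀]]` (minus
the adjugate), so it maps transcendental elements to transcendental elements. Hence the
substitution is injective on polynomials and extends to the fraction field; the extensions of the
two matrices are mutually inverse because their product is a nonzero scalar matrix.
-/

open MvPolynomial Function Set Algebra

theorem ne_zero_or_ne_zero_of_mul_ne_mul {M : Type*} [MulZeroClass M] {a b c e : M}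
    (hdet : a * e ≠ b * c) : c ≠ 0 ∨ e ≠ 0 := by
  by_contra! h
  exact hdet (by simp [h.1, h.2])

section Mobius

variable {K : Type*} [Field K]

def mobius (a b c e x : K) : K := (a * x + b) / (c * x + e)

theorem map_mobius {L F : Type*} [Field L] [FunLike F K L] [RingHomClass F K L] (f : F)
    (a b c e x : K) :
    f (mobius a b c e x) = mobius (f a) (f b) (f c) (f e) (f x) := by
  simp only [mobius, map_div₀, map_add, map_mul]

theorem mobius_neg_mobius {a b c e x : K} (hx : c * x + e ≠ 0) (hdet : a * e ≠ b * c) :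
    mobius (-e) b c (-a) (mobius a b c e x) = x := by
  have hdet' : b * c - a * e ≠ 0 := sub_ne_zero.mpr hdet.symm
  have hden : c * mobius a b c e x + -a = (b * c - a * e) / (c * x + e) := by
    rw [mobius]; field_simp; ring
  have hnum : -e * mobius a b c e x + b = x * ((b * c - a * e) / (c * x + e)) := by
    rw [mobius, mul_div_assoc', div_add' _ _ _ hx, mul_div_assoc', div_left_inj' hx]; ring
  rw [mobius, hden, hnum, mul_div_cancel_right₀ _ (div_ne_zero hdet' hx)]

variable {R : Type*} [CommRing R] [IsDomain R] [Algebra R K]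

theorem IsAlgebraic.mobius {a b c e x : K} (ha : IsAlgebraic R a) (hb : IsAlgebraic R b)
    (hc : IsAlgebraic R c) (he : IsAlgebraic R e) (hx : IsAlgebraic R x) :
    IsAlgebraic R (mobius a b c e x) := by
  rw [_root_.mobius, div_eq_mul_inv]
  exact ((ha.mul hx).add hb).mul ((hc.mul hx).add he).inv

theorem Transcendental.mul_add_ne_zero {c e x : K} (hx : Transcendental R x)
    (hc : IsAlgebraic R c) (he : IsAlgebraic R e) (hce : c ≠ 0 ∨ e ≠ 0) : c * x + e ≠ 0 := by
  intro h
  rcases eq_or_ne c 0 with rfl | hc0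
  · simp_all
  · have hx' : x = -e * c⁻¹ := by field_simp; linear_combination h
    exact hx (hx' ▸ he.neg.mul hc.inv)

theorem Transcendental.mobius {a b c e x : K} (hx : Transcendental R x) (ha : IsAlgebraic R a)
    (hb : IsAlgebraic R b) (hc : IsAlgebraic R c) (he : IsAlgebraic R e)
    (hdet : a * e ≠ b * c) : Transcendental R (mobius a b c e x) := by
  intro hs
  rw [← mobius_neg_mobius (hx.mul_add_ne_zero hc he (ne_zero_or_ne_zero_of_mul_ne_mul hdet))
    hdet] at hx
  exact hx (he.neg.mobius hb hc ha.neg hs)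

end Mobius

theorem Subalgebra.isAlgebraic_of_mem {R A : Type*} [CommRing R] [CommRing A] [Nontrivial A]
    [Algebra R A] {S : Subalgebra R A} {y : A} (hy : y ∈ S) : IsAlgebraic S y :=
  isAlgebraic_algebraMap (⟨y, hy⟩ : S)

theorem AlgebraicIndependent.update_iff {ι R A : Type*} [CommRing R] [CommRing A] [Algebra R A]
    [DecidableEq ι] {x : ι → A} (hx : AlgebraicIndependent R x) (i : ι) (s : A) :
    AlgebraicIndependent R (update x i s) ↔ Transcendental (adjoin R (x '' {i}ᶜ)) s := by
  have hrest : AlgebraicIndepOn R (update x i s) {i}ᶜ := by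
    convert hx.comp _ Subtype.val_injective using 1
    funext j
    exact update_of_ne j.2 s x
  have himage : update x i s '' {i}ᶜ = x '' {i}ᶜ :=
    image_congr fun j hj => update_of_ne hj s x
  have huniv : insert i {i}ᶜ = univ := by
    ext j; by_cases h : j = i <;> simp [h]
  rw [← AlgebraicIndepOn.univ, ← huniv, AlgebraicIndepOn.insert_iff (by simp), himage,
    update_self, and_iff_right hrest]

section RationalFunctionField

variable {ι k : Type*} [Field k]

local notation "K" => FractionRing (MvPolynomial ι k)

variable (k) in
noncomputable def ratVar (i : ι) : K := algebraMap (MvPolynomial ι k) K (X i)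

theorem algebraicIndependent_ratVar : AlgebraicIndependent k (ratVar k : ι → K) :=
  (algebraicIndependent_X ι k).map' (f := IsScalarTower.toAlgHom k (MvPolynomial ι k) K)
    (IsFractionRing.injective _ _)

theorem algHom_ext_ratVar {L : Type*} [Semiring L] [Algebra k L] {f g : K →ₐ[k] L}
    (h : ∀ i, f (ratVar k i) = g (ratVar k i)) : f = g :=
  IsLocalization.algHom_ext (nonZeroDivisors _) (MvPolynomial.algHom_ext h)

theorem exists_algHom_ratVar {L : Type*} [Field L] [Algebra k L] {v : ι → L}
    (hv : AlgebraicIndependent k v) : ∃ σ : K →ₐ[k] L, ∀ i, σ (ratVar k i) = v i :=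
  ⟨IsFractionRing.liftAlgHom (algebraicIndependent_iff_injective_aeval.1 hv), fun i => by
    rw [ratVar, IsFractionRing.liftAlgHom_apply, IsFractionRing.lift_algebraMap]
    exact aeval_X v i⟩

theorem algebraMap_mem_adjoin_ratVar {s : Set ι} {p : MvPolynomial ι k}
    (hp : p ∈ supported k s) : algebraMap (MvPolynomial ι k) K p ∈ adjoin k (ratVar k '' s) := by
  have := (Subalgebra.mem_map (f := IsScalarTower.toAlgHom k (MvPolynomial ι k) K)).2 ⟨p, hp, rfl⟩
  rwa [supported_eq_adjoin_X, AlgHom.map_adjoin, image_image] at this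

variable [DecidableEq ι] (i₀ : ι)

local notation "A₀" => adjoin k (ratVar k '' (singleton i₀)ᶜ)

theorem transcendental_ratVar : Transcendental A₀ (ratVar k i₀) := by
  rw [← algebraicIndependent_ratVar.update_iff, update_eq_self]
  exact algebraicIndependent_ratVar

theorem exists_algHom_mobius {a b c e : K} (ha : a ∈ A₀) (hb : b ∈ A₀) (hc : c ∈ A₀)
    (he : e ∈ A₀) (hdet : a * e ≠ b * c) :
    ∃ σ : K →ₐ[k] K, σ (ratVar k i₀) = mobius a b c e (ratVar k i₀) ∧ ∀ y ∈ A₀, σ y = y := by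
  have ht := (transcendental_ratVar (k := k) i₀).mobius (Subalgebra.isAlgebraic_of_mem ha)
    (Subalgebra.isAlgebraic_of_mem hb) (Subalgebra.isAlgebraic_of_mem hc)
    (Subalgebra.isAlgebraic_of_mem he) hdet
  have hv := (algebraicIndependent_ratVar.update_iff i₀ (mobius a b c e (ratVar k i₀))).2 ht
  obtain ⟨σ, hσ⟩ := exists_algHom_ratVar hv
  refine ⟨σ, by rw [hσ, update_self], fun y hy => ?_⟩
  refine (AlgHom.eqOn_adjoin_iff (ψ := AlgHom.id k K)).2 ?_ hy
  rintro _ ⟨i, hi, rfl⟩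
  rw [hσ, update_of_ne hi, AlgHom.id_apply]

theorem AlgHom.comp_eq_id_of_mobius {a b c e : K} (ha : a ∈ A₀) (hb : b ∈ A₀) (hc : c ∈ A₀)
    (he : e ∈ A₀) (hdet : a * e ≠ b * c) {σ τ : K →ₐ[k] K}
    (hσ : σ (ratVar k i₀) = mobius a b c e (ratVar k i₀)) (hσfix : ∀ y ∈ A₀, σ y = y)
    (hτ : τ (ratVar k i₀) = mobius (-e) b c (-a) (ratVar k i₀)) (hτfix : ∀ y ∈ A₀, τ y = y) :
    σ.comp τ = AlgHom.id k K := by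
  have hden : c * ratVar k i₀ + e ≠ 0 :=
    (transcendental_ratVar (k := k) i₀).mul_add_ne_zero (Subalgebra.isAlgebraic_of_mem hc)
      (Subalgebra.isAlgebraic_of_mem he) (ne_zero_or_ne_zero_of_mul_ne_mul hdet)
  refine algHom_ext_ratVar fun i => ?_
  rcases eq_or_ne i i₀ with rfl | hi
  · rw [AlgHom.comp_apply, hτ, AlgHom.id_apply, map_mobius]
    simp only [map_neg, hσfix a ha, hσfix b hb, hσfix c hc, hσfix e he, hσ]
    exact mobius_neg_mobius hden hdet
  · have hi' : ratVar k i ∈ A₀ := subset_adjoin ⟨i, hi, rfl⟩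
    rw [AlgHom.comp_apply, hτfix _ hi', hσfix _ hi', AlgHom.id_apply]

theorem exists_algEquiv_mobius {a b c e : K} (ha : a ∈ A₀) (hb : b ∈ A₀) (hc : c ∈ A₀)
    (he : e ∈ A₀) (hdet : a * e ≠ b * c) :
    ∃ σ : K ≃ₐ[k] K, σ (ratVar k i₀) = mobius a b c e (ratVar k i₀) ∧ (∀ y ∈ A₀, σ y = y) ∧
      σ.symm (ratVar k i₀) = mobius (-e) b c (-a) (ratVar k i₀) ∧ ∀ y ∈ A₀, σ.symm y = y := by
  have hdet' : -e * -a ≠ b * c := by rwa [neg_mul_neg, mul_comm]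
  obtain ⟨σ, hσ, hσfix⟩ := exists_algHom_mobius i₀ ha hb hc he hdet
  obtain ⟨τ, hτ, hτfix⟩ := exists_algHom_mobius i₀ (neg_mem he) hb hc (neg_mem ha) hdet'
  have hτσ : τ.comp σ = AlgHom.id k K := by
    refine AlgHom.comp_eq_id_of_mobius i₀ (neg_mem he) hb hc (neg_mem ha) hdet' hτ hτfix ?_ hσfix
    rwa [neg_neg, neg_neg]
  exact ⟨.ofAlgHom σ τ (AlgHom.comp_eq_id_of_mobius i₀ ha hb hc he hdet hσ hσfix hτ hτfix) hτσ,
    hσ, hσfix, hτ, hτfix⟩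

end RationalFunctionField

theorem deJonquieres_birational_general (r : ℕ)
    (F₀ F G₀ G : MvPolynomial (Fin (r + 1)) ℂ)
    (hF₀s : F₀ ∈ MvPolynomial.supported ℂ {i | i ≠ 0})
    (hFs : F ∈ MvPolynomial.supported ℂ {i | i ≠ 0})
    (hG₀s : G₀ ∈ MvPolynomial.supported ℂ {i | i ≠ 0})
    (hGs : G ∈ MvPolynomial.supported ℂ {i | i ≠ 0})
    (hnd : F₀ * G ≠ F * G₀) :
    letI K := FractionRing (MvPolynomial (Fin (r + 1)) ℂ)
    letI φ : MvPolynomial (Fin (r + 1)) ℂ →+* K := algebraMap _ _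
    ∃ σ : K ≃ₐ[ℂ] K,
      σ (φ (MvPolynomial.X 0)) =
        φ (MvPolynomial.X 0 * F₀ + G₀) / φ (MvPolynomial.X 0 * F + G) ∧
      (∀ i : Fin (r + 1), i ≠ 0 → σ (φ (MvPolynomial.X i)) = φ (MvPolynomial.X i)) ∧
      σ.symm (φ (MvPolynomial.X 0)) =
        φ (G₀ - MvPolynomial.X 0 * G) / φ (MvPolynomial.X 0 * F - F₀) ∧
      (∀ i : Fin (r + 1), i ≠ 0 → σ.symm (φ (MvPolynomial.X i)) = φ (MvPolynomial.X i)) := by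
  obtain ⟨σ, hσ, hσfix, hσsymm, hσsymmfix⟩ := exists_algEquiv_mobius (0 : Fin (r + 1))
    (algebraMap_mem_adjoin_ratVar hF₀s) (algebraMap_mem_adjoin_ratVar hG₀s)
    (algebraMap_mem_adjoin_ratVar hFs) (algebraMap_mem_adjoin_ratVar hGs)
    (by rw [← map_mul, ← map_mul, mul_comm G₀]; exact (IsFractionRing.injective _ _).ne hnd)
  have hX {i : Fin (r + 1)} (hi : i ≠ 0) : ratVar ℂ i ∈ adjoin ℂ (ratVar ℂ '' {0}ᶜ) :=
    subset_adjoin ⟨i, hi, rfl⟩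
  refine ⟨σ, hσ.trans ?_, fun i hi => hσfix _ (hX hi), hσsymm.trans ?_,
    fun i hi => hσsymmfix _ (hX hi)⟩ <;>
  · simp only [mobius, ratVar, map_add, map_sub, map_mul]
    ring

/-- De Jonquières transformations are birational, and their inverses are again de
Jonquières transformations. -/
theorem deJonquieres_birational (r d : ℕ) (hr : 1 ≤ r) (hd : 1 ≤ d)
    (F₀ F G₀ G : MvPolynomial (Fin (r + 1)) ℂ)
    (hF₀ : F₀.IsHomogeneous (d - 1)) (hF : F.IsHomogeneous (d - 1))
    (hG₀ : G₀.IsHomogeneous d) (hG : G.IsHomogeneous d)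
    (hF₀s : F₀ ∈ MvPolynomial.supported ℂ {i | i ≠ 0})
    (hFs : F ∈ MvPolynomial.supported ℂ {i | i ≠ 0})
    (hG₀s : G₀ ∈ MvPolynomial.supported ℂ {i | i ≠ 0})
    (hGs : G ∈ MvPolynomial.supported ℂ {i | i ≠ 0})
    (hnd : F₀ * G ≠ F * G₀) :
    letI K := FractionRing (MvPolynomial (Fin (r + 1)) ℂ)
    letI φ : MvPolynomial (Fin (r + 1)) ℂ →+* K := algebraMap _ _
    ∃ σ : K ≃ₐ[ℂ] K,
      σ (φ (MvPolynomial.X 0)) =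
        φ (MvPolynomial.X 0 * F₀ + G₀) / φ (MvPolynomial.X 0 * F + G) ∧
      (∀ i : Fin (r + 1), i ≠ 0 → σ (φ (MvPolynomial.X i)) = φ (MvPolynomial.X i)) ∧
      σ.symm (φ (MvPolynomial.X 0)) =
        φ (G₀ - MvPolynomial.X 0 * G) / φ (MvPolynomial.X 0 * F - F₀) ∧
      (∀ i : Fin (r + 1), i ≠ 0 → σ.symm (φ (MvPolynomial.X i)) = φ (MvPolynomial.X i)) :=
  deJonquieres_birational_general r F₀ F G₀ G hF₀s hFs hG₀s hGs hnd
end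

section
/- Let r ≥ 2 and d ≥ 1. Let P = x_0·F + G ∈ ℂ[x_0,…,x_r], where F and G are homogeneous of degrees d−1 and d respectively, neither involving x_0, F ≠ 0, and every common divisor of F and G is a unit (so P is an irreducible monoid with vertex [1:0:…:0]). Then there exist homogeneous polynomials H_1,…,H_r of degree d, an integer δ' ≥ 1, homogeneous polynomials G_0,…,G_r of degree δ', and a nonzero homogeneous polynomial Φ such that, setting H_0 := P, one has G_i(H_0, H_1, …, H_r) = Φ·x_i for i = 0,…,r, and moreover there exists v ∈ ℂ^{r+1} with P(v) = 0 and Φ(v) ≠ 0. (Every irreducible monoid is Cremona equivalent to a hyperplane: the Cremona transformation [H_0 : ⋯ : H_r] maps the hypersurface P = 0 into the hyperplane y_0 = 0 and is an isomorphism at a general point of it.) -/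
/-!
With `P = x₀F + G`, the map `H = [P : x₁F : ⋯ : x_rF]` is inverted by
`[x₀F − G : x₁F : ⋯ : x_rF]`. Indeed `F` and `G` do not involve `x₀`, so substituting `H`
into them amounts to scaling every variable by `F`, and homogeneity turns this into
`F(H) = F^d` and `G(H) = F^d G`; hence `H₀F(H) − G(H) = x₀F^{d+1}` and `HᵢF(H) = xᵢF^{d+1}`.
The factor `Φ = F^{d+1}` does not vanish identically on the monoid: at a point `w` with
`F(w) ≠ 0`, replacing `w₀` by `−G(w)/F(w)` gives a point of `P = 0` with the same values
of `F` and `G`.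
-/

open MvPolynomial

namespace MvPolynomial

variable {σ R : Type*}

theorem aeval_eq_of_mem_supported [CommSemiring R] {A : Type*} [CommSemiring A] [Algebra R A]
    {s : Set σ} {p : MvPolynomial σ R} (hp : p ∈ supported R s) {f g : σ → A}
    (h : ∀ i ∈ s, f i = g i) : aeval f p = aeval g p := by
  rw [supported_eq_range_rename, AlgHom.mem_range] at hp
  obtain ⟨q, rfl⟩ := hp
  rw [aeval_rename, aeval_rename, show f ∘ Subtype.val = g ∘ Subtype.val from
    _root_.funext fun i : s => h i i.2]

theorem IsHomogeneous.aeval_X_mul [CommSemiring R] {p : MvPolynomial σ R} {n : ℕ}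
    (hp : p.IsHomogeneous n) (c : MvPolynomial σ R) :
    MvPolynomial.aeval (fun i => X i * c) p = c ^ n * p := by
  rw [p.as_sum, map_sum, Finset.mul_sum]
  refine Finset.sum_congr rfl fun u hu => ?_
  have hdeg : u.degree = n := by
    by_contra h
    exact mem_support_iff.mp hu (hp.coeff_eq_zero h)
  have hprod : ∏ i ∈ u.support, (X i * c) ^ u i
      = (∏ i ∈ u.support, (X i : MvPolynomial σ R) ^ u i) * c ^ u.degree := by
    rw [Finsupp.degree_apply, ← Finset.prod_pow_eq_pow_sum, ← Finset.prod_mul_distrib]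
    exact Finset.prod_congr rfl fun i _ => mul_pow _ _ _
  rw [aeval_monomial, monomial_eq, Finsupp.prod, Finsupp.prod, hprod, hdeg, algebraMap_eq]
  ring

theorem eval_update_of_mem_supported [CommSemiring R] [DecidableEq σ] {i₀ : σ}
    {p : MvPolynomial σ R} (hp : p ∈ supported R {i | i ≠ i₀}) (w : σ → R) (a : R) :
    eval (Function.update w i₀ a) p = eval w p :=
  aeval_eq_of_mem_supported hp fun _ hi => Function.update_of_ne hi _ _

theorem exists_eval_X_mul_add_eq_zero_and_eval_ne_zero {K : Type*} [Field K] [Infinite K]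
    [DecidableEq σ] {i₀ : σ} {F G : MvPolynomial σ K} (hF0 : F ≠ 0)
    (hFs : F ∈ supported K {i | i ≠ i₀}) (hGs : G ∈ supported K {i | i ≠ i₀}) :
    ∃ v : σ → K, eval v (X i₀ * F + G) = 0 ∧ eval v F ≠ 0 := by
  obtain ⟨w, hw⟩ : ∃ w, eval w F ≠ 0 := by
    by_contra! h
    exact hF0 (MvPolynomial.funext fun x => by simp [h x])
  refine ⟨Function.update w i₀ (-(eval w G / eval w F)), ?_, ?_⟩
  · rw [map_add, map_mul, eval_X, Function.update_self, eval_update_of_mem_supported hFs,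
      eval_update_of_mem_supported hGs]
    field_simp
    ring
  · rwa [eval_update_of_mem_supported hFs]

end MvPolynomial

section MonoidCremona

variable {σ R : Type*} [DecidableEq σ] [CommSemiring R]

noncomputable def monoidCremona (i₀ : σ) (F Q : MvPolynomial σ R) : σ → MvPolynomial σ R :=
  Function.update (fun i => X i * F) i₀ (X i₀ * F + Q)

variable {i₀ : σ} {F Q : MvPolynomial σ R}

@[simp]
theorem monoidCremona_self : monoidCremona i₀ F Q i₀ = X i₀ * F + Q :=
  Function.update_self _ _ _

theorem monoidCremona_of_ne {i : σ} (hi : i ≠ i₀) : monoidCremona i₀ F Q i = X i * F :=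
  Function.update_of_ne hi _ _

theorem isHomogeneous_monoidCremona {n : ℕ} (hF : F.IsHomogeneous n)
    (hQ : Q.IsHomogeneous (n + 1)) (i : σ) : (monoidCremona i₀ F Q i).IsHomogeneous (n + 1) := by
  have hXF : ∀ j, (X j * F).IsHomogeneous (n + 1) := fun j => by
    simpa only [add_comm 1 n] using (isHomogeneous_X R j).mul hF
  by_cases hi : i = i₀
  · subst hi
    rw [monoidCremona_self]
    exact (hXF i).add hQ
  · rw [monoidCremona_of_ne hi]
    exact hXF i

theorem aeval_monoidCremona_of_mem_supported {p : MvPolynomial σ R}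
    (hp : p ∈ supported R {i | i ≠ i₀}) {n : ℕ} (hpn : p.IsHomogeneous n) :
    aeval (monoidCremona i₀ F Q) p = F ^ n * p := by
  rw [aeval_eq_of_mem_supported hp fun i hi => monoidCremona_of_ne hi, hpn.aeval_X_mul]

end MonoidCremona

theorem aeval_monoidCremona_monoidCremona_neg {σ R : Type*} [DecidableEq σ] [CommRing R]
    {i₀ : σ} {F G : MvPolynomial σ R} {n : ℕ}
    (hFs : F ∈ supported R {i | i ≠ i₀}) (hF : F.IsHomogeneous n)
    (hGs : G ∈ supported R {i | i ≠ i₀}) (hG : G.IsHomogeneous (n + 1)) (i : σ) :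
    aeval (monoidCremona i₀ F G) (monoidCremona i₀ F (-G) i) = F ^ (n + 2) * X i := by
  have hF' : aeval (monoidCremona i₀ F G) F = F ^ n * F :=
    aeval_monoidCremona_of_mem_supported hFs hF
  have hG' : aeval (monoidCremona i₀ F G) G = F ^ (n + 1) * G :=
    aeval_monoidCremona_of_mem_supported hGs hG
  by_cases hi : i = i₀
  · subst hi
    rw [monoidCremona_self, map_add, map_mul, map_neg, aeval_X, monoidCremona_self, hF', hG']
    ring
  · rw [monoidCremona_of_ne hi, map_mul, aeval_X, monoidCremona_of_ne hi, hF']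
    ring

theorem irreducible_monoid_cremona_equivalent_hyperplane_general (r d : ℕ) (hd : 1 ≤ d)
    (F G : MvPolynomial (Fin (r + 1)) ℂ)
    (hF : F.IsHomogeneous (d - 1)) (hG : G.IsHomogeneous d)
    (hFs : F ∈ MvPolynomial.supported ℂ {i | i ≠ 0})
    (hGs : G ∈ MvPolynomial.supported ℂ {i | i ≠ 0})
    (hF0 : F ≠ 0) :
    ∃ (H : Fin (r + 1) → MvPolynomial (Fin (r + 1)) ℂ),
      H 0 = MvPolynomial.X 0 * F + G ∧
      (∀ i : Fin (r + 1), i ≠ 0 → (H i).IsHomogeneous d) ∧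
      ∃ (δ' : ℕ), 1 ≤ δ' ∧
      ∃ (G' : Fin (r + 1) → MvPolynomial (Fin (r + 1)) ℂ)
        (Φ : MvPolynomial (Fin (r + 1)) ℂ) (e : ℕ),
        (∀ i, (G' i).IsHomogeneous δ') ∧
        Φ ≠ 0 ∧ Φ.IsHomogeneous e ∧
        (∀ i, MvPolynomial.aeval H (G' i) = Φ * MvPolynomial.X i) ∧
        ∃ v : Fin (r + 1) → ℂ,
          MvPolynomial.eval v (MvPolynomial.X 0 * F + G) = 0 ∧
          MvPolynomial.eval v Φ ≠ 0 := by
  obtain ⟨n, rfl⟩ : ∃ n, d = n + 1 := ⟨d - 1, by omega⟩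
  rw [Nat.add_sub_cancel] at hF
  obtain ⟨v, hvP, hvF⟩ := exists_eval_X_mul_add_eq_zero_and_eval_ne_zero hF0 hFs hGs
  refine ⟨monoidCremona 0 F G, monoidCremona_self,
    fun i _ => isHomogeneous_monoidCremona hF hG i, n + 1, by omega,
    monoidCremona 0 F (-G), F ^ (n + 2), n * (n + 2),
    isHomogeneous_monoidCremona hF hG.neg, pow_ne_zero _ hF0, hF.pow _,
    aeval_monoidCremona_monoidCremona_neg hFs hF hGs hG, v, hvP, ?_⟩
  rw [map_pow]
  exact pow_ne_zero _ hvF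

/-- Every irreducible monoid is Cremona equivalent to a hyperplane: there is a Cremona
transformation whose zeroth coordinate is the monoid itself (so it maps the monoid into the
hyperplane `y₀ = 0`) and which is a local isomorphism at some point of the monoid. -/
theorem irreducible_monoid_cremona_equivalent_hyperplane (r d : ℕ) (hr : 2 ≤ r) (hd : 1 ≤ d)
    (F G : MvPolynomial (Fin (r + 1)) ℂ)
    (hF : F.IsHomogeneous (d - 1)) (hG : G.IsHomogeneous d)
    (hFs : F ∈ MvPolynomial.supported ℂ {i | i ≠ 0})
    (hGs : G ∈ MvPolynomial.supported ℂ {i | i ≠ 0})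
    (hF0 : F ≠ 0)
    (hcop : ∀ D : MvPolynomial (Fin (r + 1)) ℂ, D ∣ F → D ∣ G → IsUnit D) :
    ∃ (H : Fin (r + 1) → MvPolynomial (Fin (r + 1)) ℂ),
      H 0 = MvPolynomial.X 0 * F + G ∧
      (∀ i : Fin (r + 1), i ≠ 0 → (H i).IsHomogeneous d) ∧
      ∃ (δ' : ℕ), 1 ≤ δ' ∧
      ∃ (G' : Fin (r + 1) → MvPolynomial (Fin (r + 1)) ℂ)
        (Φ : MvPolynomial (Fin (r + 1)) ℂ) (e : ℕ),
        (∀ i, (G' i).IsHomogeneous δ') ∧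
        Φ ≠ 0 ∧ Φ.IsHomogeneous e ∧
        (∀ i, MvPolynomial.aeval H (G' i) = Φ * MvPolynomial.X i) ∧
        ∃ v : Fin (r + 1) → ℂ,
          MvPolynomial.eval v (MvPolynomial.X 0 * F + G) = 0 ∧
          MvPolynomial.eval v Φ ≠ 0 :=
  irreducible_monoid_cremona_equivalent_hyperplane_general r d hd F G hF hG hFs hGs hF0
end
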